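/- arXiv:1712.04581 — 2 statements merged into one kernel-verified Lean document; each statement's English description precedes it below -/
import Mathlib

section
/- Let f : ℝ^n → ℝ be convex and β-smooth, let x* be a minimizer of f, and let D := max{‖x - x*‖ : f(x) ≤ f(x₀)} be finite. Then the iterates of x_{t+1} = x_t - (1/β)∇f(x_t) satisfy f(x_T) - f(x*) ≤ βD²(1 + ln T)/(2T). -/
open RealInnerProductSpace

lemma grad_convex_ineq {n : ℕ} (f : EuclideanSpace ℝ (Fin n) → ℝ)
    (hconv : ConvexOn ℝ Set.univ f)
    {p g : EuclideanSpace ℝ (Fin n)} (hg : HasGradientAt f g p)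
    (w : EuclideanSpace ℝ (Fin n)) :
    f p + ⟪g, w - p⟫ ≤ f w := by
  set φ : ℝ → ℝ := fun θ => f (p + θ • (w - p)) with hφ
  have hline : HasDerivAt (fun θ : ℝ => p + θ • (w - p)) (w - p) 0 := by
    simpa using ((hasDerivAt_id (0:ℝ)).smul_const (w - p)).const_add p
  have hF : HasFDerivAt f (InnerProductSpace.toDual ℝ _ g) (p + (0:ℝ) • (w - p)) := by
    simpa using hg.hasFDerivAt
  have hφ0 : HasDerivAt φ ⟪g, w - p⟫ 0 := by
    have := hF.comp_hasDerivAt (0:ℝ) hline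
    exact (by simpa [InnerProductSpace.toDual_apply_apply] using this :
      HasDerivAt (f ∘ fun θ : ℝ => p + θ • (w - p)) ⟪g, w - p⟫ 0)
  have hslope : ∀ θ ∈ Set.Ioc (0:ℝ) 1, slope φ 0 θ ≤ f w - f p := by
    intro θ hθ
    have h1 : φ θ ≤ (1 - θ) * f p + θ * f w := by
      have := hconv.2 (Set.mem_univ p) (Set.mem_univ w)
        (by linarith [hθ.2] : (0:ℝ) ≤ 1 - θ) (le_of_lt hθ.1) (by ring)
      have heq : (1 - θ) • p + θ • w = p + θ • (w - p) := by module
      simpa [heq, smul_eq_mul] using this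
    have hφz : φ 0 = f p := by simp [hφ]
    rw [slope_def_field, hφz, sub_zero, div_le_iff₀ hθ.1]
    nlinarith [hθ.1]
  have htend : Filter.Tendsto (slope φ 0) (nhdsWithin 0 (Set.Ioi 0)) (nhds ⟪g, w - p⟫) := by
    have := hasDerivAt_iff_tendsto_slope.mp hφ0
    exact this.mono_left (nhdsWithin_mono 0 (fun y hy => ne_of_gt hy))
  have hle : ⟪g, w - p⟫ ≤ f w - f p := by
    refine le_of_tendsto htend ?_
    filter_upwards [Ioc_mem_nhdsGT_of_mem ⟨le_refl (0:ℝ), zero_lt_one⟩] with θ hθ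
    exact hslope θ hθ
  linarith

lemma key_ineq (T L M : ℝ) (hT : 1 ≤ T) (hM : L + 1/(T+1) ≤ M) :
    (1+L)/(4*T) - ((1+L)/(4*T))^2 ≤ (1+M)/(4*(T+1)) := by
  have hT0 : (0:ℝ) < T := by linarith
  have hT1 : (0:ℝ) < T+1 := by linarith
  have hMT : L*(T+1) + 1 ≤ M*(T+1) := by
    have h := mul_le_mul_of_nonneg_right hM hT1.le
    have e : (L + 1/(T+1))*(T+1) = L*(T+1) + 1 := by field_simp
    linarith [e ▸ h]
  have e : (1+L)/(4*T) - ((1+L)/(4*T))^2 = ((1+L)*(4*T) - (1+L)^2)/(4*T)^2 := by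
    field_simp
  rw [e, div_le_div_iff₀ (by positivity) (by positivity)]
  have H : (((1+L)*(4*T) - (1+L)^2) * (4*(T+1))) * (T+1) ≤ ((1+M)*(4*T)^2) * (T+1) := by
    nlinarith [sq_nonneg (2*T - (1+L)*(T+1)),
      mul_le_mul_of_nonneg_left hMT (by positivity : (0:ℝ) ≤ 16*T^2)]
  exact le_of_mul_le_mul_right H hT1

lemma log_succ_ge (T : ℝ) (hT : 1 ≤ T) : Real.log T + 1/(T+1) ≤ Real.log (T+1) := by
  have hT0 : (0:ℝ) < T := by linarith
  have hT1 : (0:ℝ) < T+1 := by linarith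
  have h := Real.log_le_sub_one_of_pos (show (0:ℝ) < T/(T+1) by positivity)
  rw [Real.log_div (ne_of_gt hT0) (ne_of_gt hT1)] at h
  have e : T/(T+1) - 1 = -(1/(T+1)) := by field_simp; ring
  linarith [e ▸ h]

set_option maxHeartbeats 1000000 in
/-- Gradient descent on a β-smooth convex function: `O(log T / T)` convergence. -/
theorem smooth_gd_log_convergence {n : ℕ} (T : ℕ) (hT : 0 < T)
    (f : EuclideanSpace ℝ (Fin n) → ℝ)
    (f' : EuclideanSpace ℝ (Fin n) → EuclideanSpace ℝ (Fin n))
    (hconv : ConvexOn ℝ Set.univ f)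
    (hdiff : ∀ x, HasGradientAt f (f' x) x)
    (β : ℝ) (hβ : 0 < β)
    (hsmooth : ∀ x y, f y ≤ f x + ⟪f' x, y - x⟫ + β / 2 * ‖y - x‖ ^ 2)
    (xstar : EuclideanSpace ℝ (Fin n)) (hmin : ∀ y, f xstar ≤ f y)
    (x : ℕ → EuclideanSpace ℝ (Fin n))
    (hupdate : ∀ t, x (t + 1) = x t - (1 / β) • f' (x t))
    (D : ℝ) (hD : ∀ y, f y ≤ f (x 0) → ‖y - xstar‖ ≤ D) :
    f (x T) - f xstar ≤ β * D ^ 2 * (1 + Real.log T) / (2 * T) := by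
  have hβ' : β ≠ 0 := ne_of_gt hβ
  -- descent lemma
  have descent : ∀ t, f (x (t+1)) ≤ f (x t) - ‖f' (x t)‖^2/(2*β) := by
    intro t
    have h := hsmooth (x t) (x (t+1))
    rw [hupdate t] at h
    have hv : x t - (1/β) • f' (x t) - x t = -((1/β) • f' (x t)) := by module
    rw [hv] at h
    have e1 : ⟪f' (x t), -((1/β) • f' (x t))⟫ = -((1/β) * ‖f' (x t)‖^2) := by
      rw [inner_neg_right, real_inner_smul_right, real_inner_self_eq_norm_sq]
    have e2 : ‖-((1/β) • f' (x t))‖^2 = (1/β)^2 * ‖f' (x t)‖^2 := by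
      rw [norm_neg, norm_smul, Real.norm_eq_abs, abs_of_pos (by positivity : (0:ℝ) < 1/β)]
      ring
    rw [e1, e2] at h
    have e3 : f (x t) + -((1/β) * ‖f' (x t)‖^2) + β/2 * ((1/β)^2 * ‖f' (x t)‖^2)
        = f (x t) - ‖f' (x t)‖^2/(2*β) := by
      field_simp; ring
    rw [hupdate t]
    exact h.trans_eq e3
  -- monotonicity
  have mono0 : ∀ t, f (x t) ≤ f (x 0) := by
    intro t
    induction t with
    | zero => exact le_refl _
    | succ k ih =>
      have := descent k
      have hnn : 0 ≤ ‖f' (x k)‖^2/(2*β) := by positivity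
      linarith
  -- nonnegativity of the gap
  have dnn : ∀ t, 0 ≤ f (x t) - f xstar := fun t => sub_nonneg.mpr (hmin (x t))
  -- gap bound from convexity
  have gap : ∀ t, f (x t) - f xstar ≤ ‖f' (x t)‖ * D := by
    intro t
    have h1 := grad_convex_ineq f hconv (hdiff (x t)) xstar
    have h2 : ⟪f' (x t), x t - xstar⟫ ≤ ‖f' (x t)‖ * ‖x t - xstar‖ := real_inner_le_norm _ _
    have h3 : ‖x t - xstar‖ ≤ D := hD _ (mono0 t)
    have h4 : ⟪f' (x t), xstar - x t⟫ = -⟪f' (x t), x t - xstar⟫ := by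
      rw [← inner_neg_right, neg_sub]
    have h5 : ‖f' (x t)‖ * ‖x t - xstar‖ ≤ ‖f' (x t)‖ * D :=
      mul_le_mul_of_nonneg_left h3 (norm_nonneg _)
    linarith
  have hD0 : 0 ≤ D := le_trans (norm_nonneg _) (hD (x 0) le_rfl)
  rcases hD0.eq_or_lt with h0 | hDpos
  · -- degenerate case D = 0
    have : f (x T) - f xstar ≤ 0 := by
      have := gap T
      rw [← h0] at this
      simpa using this
    rw [← h0]
    simpa using this
  -- main case
  set c : ℝ := 2*β*D^2 with hc
  have hcpos : 0 < c := by positivity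
  -- key recursion
  have hrec : ∀ t, f (x (t+1)) - f xstar ≤ (f (x t) - f xstar) - (f (x t) - f xstar)^2/c := by
    intro t
    have h1 := descent t
    have h2 := gap t
    have h3 := dnn t
    have h4 : (f (x t) - f xstar)^2 ≤ ‖f' (x t)‖^2 * D^2 := by
      nlinarith [norm_nonneg (f' (x t))]
    have h5 : (f (x t) - f xstar)^2/c ≤ ‖f' (x t)‖^2/(2*β) := by
      rw [div_le_div_iff₀ hcpos (by positivity)]
      rw [hc]
      nlinarith
    linarith
  -- induction
  have main : ∀ m : ℕ, 1 ≤ m → f (x m) - f xstar ≤ β * D^2 * (1 + Real.log m) / (2*m) := by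
    intro m hm
    induction m, hm using Nat.le_induction with
    | base =>
      have h1 := hrec 0
      have h2 := dnn 0
      have h3 : (f (x 0) - f xstar) - (f (x 0) - f xstar)^2/c ≤ c/4 := by
        rw [sub_le_iff_le_add, ← sub_le_iff_le_add']
        rw [le_div_iff₀ hcpos]
        nlinarith [sq_nonneg (f (x 0) - f xstar - c/2)]
      have e : β * D^2 * (1 + Real.log ((1:ℕ):ℝ)) / (2*((1:ℕ):ℝ)) = c/4 := by
        norm_num [Real.log_one, hc]; ring
      rw [e]
      linarith
    | succ m hm1 IH =>
      set Tr : ℝ := (m:ℝ) with hTr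
      have hTr1 : (1:ℝ) ≤ Tr := by rw [hTr]; exact_mod_cast hm1
      have hTr0 : (0:ℝ) < Tr := by linarith
      set L : ℝ := Real.log Tr with hL
      set M : ℝ := Real.log (Tr+1) with hM
      set u : ℝ := (1+L)/(4*Tr) with hu
      set u' : ℝ := (1+M)/(4*(Tr+1)) with hu'
      have hLnn : 0 ≤ L := Real.log_nonneg hTr1
      -- IH in terms of c and u
      have ecu : β * D^2 * (1 + L) / (2*Tr) = c * u := by
        rw [hc, hu]; field_simp; ring
      have IH' : f (x m) - f xstar ≤ c * u := by
        rw [← ecu]; exact IH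
      have hu12 : u ≤ 1/2 := by
        have hlog : L ≤ Tr - 1 := Real.log_le_sub_one_of_pos hTr0
        rw [hu, div_le_iff₀ (by positivity)]
        linarith
      have hstep := hrec m
      have h3 := dnn m
      -- monotone step
      have hval : (f (x m) - f xstar) - (f (x m) - f xstar)^2/c ≤ c*u - c*u^2 := by
        have hcuhalf : c*u ≤ c*(1/2) := mul_le_mul_of_nonneg_left hu12 hcpos.le
        have hA : 0 ≤ c*u - (f (x m) - f xstar) := by linarith
        have hB : 0 ≤ c - (f (x m) - f xstar) - c*u := by linarith
        have hpoly : c*(f (x m) - f xstar) - (f (x m) - f xstar)^2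
            ≤ c*(c*u) - (c*u)^2 := by
          nlinarith [mul_nonneg hA hB]
        have q1 : (f (x m) - f xstar) - (f (x m) - f xstar)^2/c
            = (c*(f (x m) - f xstar) - (f (x m) - f xstar)^2)/c := by
          field_simp
        have q2 : c*u - c*u^2 = (c*(c*u) - (c*u)^2)/c := by
          field_simp
        rw [q1, q2]
        gcongr
      -- key inequality
      have hMlog : L + 1/(Tr+1) ≤ M := log_succ_ge Tr hTr1
      have hkey : u - u^2 ≤ u' := key_ineq Tr L M hTr1 hMlog
      have hfin : c*u - c*u^2 ≤ c*u' := by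
        have := mul_le_mul_of_nonneg_left hkey hcpos.le
        nlinarith [this]
      have ecu' : β * D^2 * (1 + M) / (2*(Tr+1)) = c * u' := by
        have hne : Tr + 1 ≠ 0 := by linarith
        rw [hc, hu']
        field_simp
        ring
      have ecast : β * D^2 * (1 + Real.log ((m+1:ℕ):ℝ)) / (2*((m+1:ℕ):ℝ))
          = β * D^2 * (1 + M) / (2*(Tr+1)) := by
        push_cast; rw [hM, hTr]
      rw [ecast, ecu']
      linarith
  exact main T hT
end

section
/- Let ‖·‖ be a norm on ℝ^n with dual norm ‖y‖_* = max_{‖x‖=1}⟨x,y⟩, K a convex body, h an α_h-strongly convex function with respect to ‖·‖, and f₁,…,f_T convex functions on K with gradients ∇f_t. The mirror descent iterates x_{t+1} = argmin_{x∈K}{⟨η∇f_t(x_t), x - x_t⟩ + D_h(x‖x_t)} with constant step η satisfy Σ_{t=1}^T f_t(x_t) - Σ_{t=1}^T f_t(x*) ≤ D_h(x*‖x₀)/η + (η/(2α_h))Σ_{t=1}^T‖∇f_t(x_t)‖_*² for all x* ∈ K. -/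
/-!
Convexity of `f t` bounds the regret of round `t` by `⟪∇f_t(x_t), x_t - x*⟫`. Split this as
`⟪∇f_t(x_t), x_t - x_{t+1}⟫ + ⟪∇f_t(x_t), x_{t+1} - x*⟫`. The first-order optimality condition of
the mirror step and the three-point identity of Bregman divergences bound the second term by
`(D(x*‖x_t) - D(x*‖x_{t+1}) - D(x_{t+1}‖x_t)) / η`. The generalized Cauchy–Schwarz inequality,
Young's inequality and strong convexity of `h` bound the first term by
`D(x_{t+1}‖x_t) / η + η/(2α) ‖∇f_t(x_t)‖_*²`. The divergences telescope when summed over `t`.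
-/

open RealInnerProductSpace Finset

section NormComparison

variable {E : Type*} [NormedAddCommGroup E] [NormedSpace ℝ E] [FiniteDimensional ℝ E]

theorem Seminorm.continuous_of_finiteDimensional (p : Seminorm ℝ E) : Continuous p :=
  continuousOn_univ.mp (p.convexOn.continuousOn isOpen_univ)

theorem Seminorm.exists_pos_mul_norm_le (p : Seminorm ℝ E) (hp : ∀ x, p x = 0 → x = 0) :
    ∃ c > 0, ∀ x, c * ‖x‖ ≤ p x := by
  rcases subsingleton_or_nontrivial E with hE | hE
  · exact ⟨1, one_pos, fun x => by simp [Subsingleton.elim x 0]⟩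
  obtain ⟨z, hz, hzmin⟩ := (isCompact_sphere (0 : E) 1).exists_isMinOn
    (NormedSpace.sphere_nonempty.mpr zero_le_one) p.continuous_of_finiteDimensional.continuousOn
  have hz1 : ‖z‖ = 1 := by simpa using hz
  have hpz : 0 < p z := (apply_nonneg p z).lt_of_ne fun h0 => by
    simp [hp z h0.symm] at hz1
  refine ⟨p z, hpz, fun x => ?_⟩
  rcases eq_or_ne x 0 with rfl | hx
  · simp
  have hnx : 0 < ‖x‖ := norm_pos_iff.mpr hx
  have hmin : p z ≤ p (‖x‖⁻¹ • x) := hzmin (by simp [norm_smul, hnx.ne'])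
  rw [map_smul_eq_mul, norm_inv, norm_norm] at hmin
  rwa [← le_div_iff₀ hnx, div_eq_inv_mul]

end NormComparison

section Calculus

variable {E : Type*} [NormedAddCommGroup E] [NormedSpace ℝ E] {K : Set E}

theorem ConvexOn.le_sub_of_hasFDerivAt {f : E → ℝ} {f' : E →L[ℝ] ℝ} {x y : E}
    (hf : ConvexOn ℝ K f) (hx : x ∈ K) (hy : y ∈ K) (hf' : HasFDerivAt f f' x) :
    f' (y - x) ≤ f y - f x := by
  have hline : ConvexOn ℝ (Set.Icc 0 1) (f ∘ AffineMap.lineMap (k := ℝ) x y) :=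
    (hf.comp_affineMap _).subset (fun s hs => hf.1.lineMap_mem hx hy hs) (convex_Icc 0 1)
  have hderiv : HasDerivAt (f ∘ AffineMap.lineMap (k := ℝ) x y) (f' (y - x)) 0 :=
    hf'.comp_hasDerivAt_of_eq 0 AffineMap.hasDerivAt_lineMap (by simp)
  simpa [slope] using hline.le_slope_of_hasDerivAt (by simp) (by simp) one_pos hderiv

theorem IsMinOn.apply_sub_nonneg_of_hasFDerivWithinAt {φ : E → ℝ} {φ' : E →L[ℝ] ℝ} {a y : E}
    (hK : Convex ℝ K) (ha : a ∈ K) (hy : y ∈ K) (hmin : IsMinOn φ K a)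
    (hφ : HasFDerivWithinAt φ φ' K a) : 0 ≤ φ' (y - a) :=
  hmin.localize.hasFDerivWithinAt_nonneg hφ
    (sub_mem_posTangentConeAt_of_segment_subset (hK.segment_subset ha hy))

end Calculus

theorem mul_mul_le_half_mul_sq_add {α : ℝ} (hα : 0 < α) (η a b : ℝ) :
    η * (a * b) ≤ α / 2 * a ^ 2 + η ^ 2 / (2 * α) * b ^ 2 := by
  have hsq : α / 2 * a ^ 2 + η ^ 2 / (2 * α) * b ^ 2 - η * (a * b)
      = (α * a - η * b) ^ 2 / (2 * α) := by
    field_simp; ring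
  linarith [show 0 ≤ (α * a - η * b) ^ 2 / (2 * α) by positivity]

theorem sum_le_div_add_sum_of_le_telescoping {a c d : ℕ → ℝ} {η : ℝ} (hη : 0 < η) (T : ℕ)
    (hd : 0 ≤ d T) (h : ∀ t, a t ≤ (d t - d (t + 1)) / η + c t) :
    ∑ t ∈ range T, a t ≤ d 0 / η + ∑ t ∈ range T, c t :=
  calc ∑ t ∈ range T, a t ≤ ∑ t ∈ range T, ((d t - d (t + 1)) / η + c t) :=
        sum_le_sum fun t _ => h t
    _ = (d 0 - d T) / η + ∑ t ∈ range T, c t := by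
        rw [sum_add_distrib, ← sum_div, sum_range_sub']
    _ ≤ d 0 / η + ∑ t ∈ range T, c t := by gcongr; linarith

section MirrorDescent

variable {E : Type*} [NormedAddCommGroup E] [InnerProductSpace ℝ E]

noncomputable def dualNorm (N : E → ℝ) (y : E) : ℝ :=
  sSup {r : ℝ | ∃ x, N x = 1 ∧ r = ⟪x, y⟫}

theorem inner_le_mul_dualNorm [FiniteDimensional ℝ E] (p : Seminorm ℝ E)
    (hp : ∀ x, p x = 0 → x = 0) (x y : E) : ⟪x, y⟫ ≤ p x * dualNorm p y := by
  rcases eq_or_ne x 0 with rfl | hx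
  · simp
  obtain ⟨c, hc, hcp⟩ := p.exists_pos_mul_norm_le hp
  have hpx : 0 < p x := (apply_nonneg p x).lt_of_ne fun h0 => hx (hp x h0.symm)
  have hbdd : BddAbove {r : ℝ | ∃ x, p x = 1 ∧ r = ⟪x, y⟫} := by
    refine ⟨c⁻¹ * ‖y‖, ?_⟩
    rintro _ ⟨w, hw, rfl⟩
    have hwc : ‖w‖ ≤ c⁻¹ := by
      rw [← mul_one c⁻¹, le_inv_mul_iff₀ hc, ← hw]
      exact hcp w
    exact (real_inner_le_norm w y).trans (by gcongr)
  have hmem : ⟪(p x)⁻¹ • x, y⟫ ∈ {r : ℝ | ∃ x, p x = 1 ∧ r = ⟪x, y⟫} :=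
    ⟨_, by rw [map_smul_eq_mul, norm_inv, Real.norm_of_nonneg hpx.le, inv_mul_cancel₀ hpx.ne'], rfl⟩
  have hle := le_csSup hbdd hmem
  rwa [real_inner_smul_left, inv_mul_le_iff₀ hpx] at hle

noncomputable def bregmanDiv (h : E → ℝ) (h' : E → E) (y x : E) : ℝ :=
  h y - h x - ⟪h' x, y - x⟫

theorem bregmanDiv_three_point (h : E → ℝ) (h' : E → E) (u x z : E) :
    ⟪h' x - h' z, z - u⟫
      = bregmanDiv h h' u x - bregmanDiv h h' u z - bregmanDiv h h' z x := by
  simp only [bregmanDiv, inner_sub_left, inner_sub_right]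
  ring

variable [CompleteSpace E] {h : E → ℝ} {h' : E → E} {K : Set E}

theorem inner_sub_nonneg_of_isMinOn_inner_add_bregmanDiv {w a b u : E}
    (hh : HasGradientAt h (h' a) a) (hK : Convex ℝ K) (ha : a ∈ K) (hu : u ∈ K)
    (hmin : IsMinOn (fun p => ⟪w, p - b⟫ + bregmanDiv h h' p b) K a) :
    0 ≤ ⟪w + h' a - h' b, u - a⟫ := by
  have hφ : HasFDerivAt (fun p => ⟪w, p - b⟫ + bregmanDiv h h' p b)
      (InnerProductSpace.toDual ℝ E (h' a) + innerSL ℝ (w - h' b)) a := by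
    refine (((hasGradientAt_iff_hasFDerivAt.mp hh).add (innerSL ℝ (w - h' b)).hasFDerivAt).add_const
      (-(h b + ⟪w - h' b, b⟫))).congr_of_eventuallyEq (.of_forall fun p => ?_)
    simp only [bregmanDiv, Pi.add_apply, innerSL_apply_apply, inner_sub_left, inner_sub_right]
    ring
  have := hmin.apply_sub_nonneg_of_hasFDerivWithinAt hK ha hu hφ.hasFDerivWithinAt
  simp only [add_apply, InnerProductSpace.toDual_apply_apply, innerSL_apply_apply] at this
  simp only [inner_add_left, inner_sub_left] at this ⊢
  linarith

theorem mirror_descent_step [FiniteDimensional ℝ E] (N : Seminorm ℝ E)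
    (hN : ∀ x, N x = 0 → x = 0) {α : ℝ} (hα : 0 < α)
    (hh : ∀ x, HasGradientAt h (h' x) x)
    (hsc : ∀ x y, α / 2 * N (y - x) ^ 2 ≤ bregmanDiv h h' y x) (hK : Convex ℝ K)
    {f : E → ℝ} {g : E} {η : ℝ} {x x' u : E} (hf : ConvexOn ℝ K f) (hg : HasGradientAt f g x)
    (hη : 0 < η) (hx : x ∈ K) (hx' : x' ∈ K) (hu : u ∈ K)
    (hmin : IsMinOn (fun p => ⟪η • g, p - x⟫ + bregmanDiv h h' p x) K x') :
    f x - f u ≤ (bregmanDiv h h' u x - bregmanDiv h h' u x') / η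
      + η / (2 * α) * dualNorm N g ^ 2 := by
  have hlin : ⟪g, u - x⟫ ≤ f u - f x := by
    simpa using hf.le_sub_of_hasFDerivAt hx hu (hasGradientAt_iff_hasFDerivAt.mp hg)
  have hdescent : f x - f u ≤ ⟪g, x - x'⟫ + ⟪g, x' - u⟫ := by
    have : ⟪g, x - x'⟫ + ⟪g, x' - u⟫ = -⟪g, u - x⟫ := by simp only [inner_sub_right]; ring
    linarith
  have hprox : η * ⟪g, x' - u⟫
      ≤ bregmanDiv h h' u x - bregmanDiv h h' u x' - bregmanDiv h h' x' x := by
    have hopt := inner_sub_nonneg_of_isMinOn_inner_add_bregmanDiv (hh x') hK hx' hu hmin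
    rw [← bregmanDiv_three_point]
    simp only [inner_add_left, inner_sub_left, inner_sub_right, real_inner_smul_left] at hopt ⊢
    linarith
  have hdual : ⟪g, x - x'⟫ ≤ N (x - x') * dualNorm N g :=
    real_inner_comm g _ ▸ inner_le_mul_dualNorm N hN (x - x') g
  have hyoung := mul_mul_le_half_mul_sq_add hα η (N (x - x')) (dualNorm N g)
  have hstrong : α / 2 * N (x - x') ^ 2 ≤ bregmanDiv h h' x' x := by
    rw [map_sub_rev]; exact hsc x x'
  rw [div_add' _ _ _ hη.ne', le_div_iff₀ hη]
  calc (f x - f u) * η ≤ η * ⟪g, x - x'⟫ + η * ⟪g, x' - u⟫ := by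
        rw [mul_comm, ← mul_add]; exact mul_le_mul_of_nonneg_left hdescent hη.le
    _ ≤ η * (N (x - x') * dualNorm N g)
          + (bregmanDiv h h' u x - bregmanDiv h h' u x' - bregmanDiv h h' x' x) := by
        gcongr
    _ ≤ bregmanDiv h h' u x - bregmanDiv h h' u x' + η / (2 * α) * dualNorm N g ^ 2 * η := by
        have : η / (2 * α) * dualNorm N g ^ 2 * η = η ^ 2 / (2 * α) * dualNorm N g ^ 2 := by ring
        linarith

end MirrorDescent

theorem mirror_descent_regret_general {n : ℕ} (T : ℕ)
    (N : EuclideanSpace ℝ (Fin n) → ℝ)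
    (hN_add : ∀ x y, N (x + y) ≤ N x + N y)
    (hN_smul : ∀ (c : ℝ) x, N (c • x) = |c| * N x)
    (hN_eq_zero : ∀ x, N x = 0 ↔ x = 0)
    (Nstar : EuclideanSpace ℝ (Fin n) → ℝ)
    (hNstar : ∀ y, Nstar y = sSup {r : ℝ | ∃ x, N x = 1 ∧ r = ⟪x, y⟫})
    (K : Set (EuclideanSpace ℝ (Fin n)))
    (hKconv : Convex ℝ K)
    (h : EuclideanSpace ℝ (Fin n) → ℝ)
    (h' : EuclideanSpace ℝ (Fin n) → EuclideanSpace ℝ (Fin n))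
    (hhdiff : ∀ x, HasGradientAt h (h' x) x)
    (αh : ℝ) (hαh : 0 < αh)
    (hsc : ∀ x y, h y ≥ h x + ⟪h' x, y - x⟫ + αh / 2 * (N (y - x)) ^ 2)
    (Dh : EuclideanSpace ℝ (Fin n) → EuclideanSpace ℝ (Fin n) → ℝ)
    (hDh : ∀ y x, Dh y x = h y - h x - ⟪h' x, y - x⟫)
    (f : ℕ → EuclideanSpace ℝ (Fin n) → ℝ)
    (f' : ℕ → EuclideanSpace ℝ (Fin n) → EuclideanSpace ℝ (Fin n))
    (hconv : ∀ t, ConvexOn ℝ K (f t))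
    (hfdiff : ∀ t x, HasGradientAt (f t) (f' t x) x)
    (η : ℝ) (hη : 0 < η)
    (x : ℕ → EuclideanSpace ℝ (Fin n)) (hx0K : x 0 ∈ K)
    (hupdateK : ∀ t, x (t + 1) ∈ K)
    (hupdate : ∀ t, ∀ p ∈ K,
      ⟪η • f' t (x t), x (t + 1) - x t⟫ + Dh (x (t + 1)) (x t)
        ≤ ⟪η • f' t (x t), p - x t⟫ + Dh p (x t)) :
    ∀ xstar ∈ K,
      ∑ t ∈ range T, f t (x t) - ∑ t ∈ range T, f t xstar
        ≤ Dh xstar (x 0) / η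
          + η / (2 * αh) * ∑ t ∈ range T, (Nstar (f' t (x t))) ^ 2 := by
  intro xstar hxstar
  obtain rfl : Nstar = dualNorm N := funext hNstar
  obtain rfl : Dh = bregmanDiv h h' := funext₂ hDh
  let p : Seminorm ℝ (EuclideanSpace ℝ (Fin n)) :=
    Seminorm.of N hN_add fun c v => by rw [Real.norm_eq_abs]; exact hN_smul c v
  have hsc' : ∀ v w, αh / 2 * p (w - v) ^ 2 ≤ bregmanDiv h h' w v := fun v w => by
    change αh / 2 * N (w - v) ^ 2 ≤ _
    simp only [bregmanDiv]; linarith [hsc v w]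
  have hxK : ∀ t, x t ∈ K
    | 0 => hx0K
    | t + 1 => hupdateK t
  rw [← sum_sub_distrib, mul_sum]
  have hfinal : 0 ≤ bregmanDiv h h' xstar (x T) :=
    (by positivity : 0 ≤ αh / 2 * p (xstar - x T) ^ 2).trans (hsc' _ _)
  exact sum_le_div_add_sum_of_le_telescoping hη T hfinal fun t =>
    mirror_descent_step p (fun v => (hN_eq_zero v).mp) hαh hhdiff hsc' hKconv (hconv t)
      (hfdiff t (x t)) hη (hxK t) (hupdateK t) hxstar (isMinOn_iff.mpr (hupdate t))

/-- Mirror descent regret bound with respect to a general norm `N` on `ℝ^n`,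
with dual norm `Nstar`, mirror map `h` that is `αh`-strongly convex w.r.t. `N`,
and Bregman divergence `Dh`. -/
theorem mirror_descent_regret {n : ℕ} (T : ℕ) (hT : 0 < T)
    (N : EuclideanSpace ℝ (Fin n) → ℝ)
    (hN_add : ∀ x y, N (x + y) ≤ N x + N y)
    (hN_smul : ∀ (c : ℝ) x, N (c • x) = |c| * N x)
    (hN_eq_zero : ∀ x, N x = 0 ↔ x = 0)
    (Nstar : EuclideanSpace ℝ (Fin n) → ℝ)
    (hNstar : ∀ y, Nstar y = sSup {r : ℝ | ∃ x, N x = 1 ∧ r = ⟪x, y⟫})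
    (K : Set (EuclideanSpace ℝ (Fin n)))
    (hKclosed : IsClosed K) (hKconv : Convex ℝ K) (hKne : K.Nonempty)
    (h : EuclideanSpace ℝ (Fin n) → ℝ)
    (h' : EuclideanSpace ℝ (Fin n) → EuclideanSpace ℝ (Fin n))
    (hhdiff : ∀ x, HasGradientAt h (h' x) x)
    (αh : ℝ) (hαh : 0 < αh)
    (hsc : ∀ x y, h y ≥ h x + ⟪h' x, y - x⟫ + αh / 2 * (N (y - x)) ^ 2)
    (Dh : EuclideanSpace ℝ (Fin n) → EuclideanSpace ℝ (Fin n) → ℝ)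
    (hDh : ∀ y x, Dh y x = h y - h x - ⟪h' x, y - x⟫)
    (f : ℕ → EuclideanSpace ℝ (Fin n) → ℝ)
    (f' : ℕ → EuclideanSpace ℝ (Fin n) → EuclideanSpace ℝ (Fin n))
    (hconv : ∀ t, ConvexOn ℝ K (f t))
    (hfdiff : ∀ t x, HasGradientAt (f t) (f' t x) x)
    (η : ℝ) (hη : 0 < η)
    (x : ℕ → EuclideanSpace ℝ (Fin n)) (hx0K : x 0 ∈ K)
    (hupdateK : ∀ t, x (t + 1) ∈ K)
    (hupdate : ∀ t, ∀ p ∈ K,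
      ⟪η • f' t (x t), x (t + 1) - x t⟫ + Dh (x (t + 1)) (x t)
        ≤ ⟪η • f' t (x t), p - x t⟫ + Dh p (x t)) :
    ∀ xstar ∈ K,
      ∑ t ∈ range T, f t (x t) - ∑ t ∈ range T, f t xstar
        ≤ Dh xstar (x 0) / η
          + η / (2 * αh) * ∑ t ∈ range T, (Nstar (f' t (x t))) ^ 2 :=
  mirror_descent_regret_general T N hN_add hN_smul hN_eq_zero Nstar hNstar K hKconv h h' hhdiff αh
    hαh hsc Dh hDh f f' hconv hfdiff η hη x hx0K hupdateK hupdate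
end
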